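/- arXiv:2605.25591 — 2 statements merged into one kernel-verified Lean document; each statement's English description precedes it below -/
import Mathlib

section
/- Let (λ_j)_{j≥0} be a non-increasing sequence of nonnegative reals converging to 0 with counting function N(λ) = #{j : λ_j > λ}. Let h : [0,∞) → [0,∞) be RV_p with p > 0 and h^♯ an RV_{1/p} asymptotic inverse of h (h(h^♯(t)) ∼ t and h^♯(h(t)) ∼ t as t → ∞). Then limsup_{j→∞} h^♯(j)·λ_j = [limsup_{λ→0+} h(λ^{-1})^{-1} N(λ)]^{1/p} and liminf_{j→∞} h^♯(j)·λ_j = [liminf_{λ→0+} h(λ^{-1})^{-1} N(λ)]^{1/p}. In particular, lim_{λ→0+} h(λ^{-1})^{-1} N(λ) = c if and only if lim_{j→∞} h^♯(j)·λ_j = c^{1/p}. -/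
open Filter Topology ENNReal

namespace CFET

/-! ### Generalities on regularly varying functions -/

lemma rv_atTop {p : ℝ} (hp : 0 < p) {h : ℝ → ℝ}
    (hpos : ∀ t ∈ Set.Ici (0:ℝ), 0 ≤ h t)
    {b : ℝ} (hb : 0 ≤ b) (hm : MonotoneOn h (Set.Ici b))
    (hrv2 : Tendsto (fun t => h (2*t)/h t) atTop (𝓝 ((2:ℝ)^p))) :
    Tendsto h atTop atTop := by
  have h2p : 1 < (2:ℝ)^p := by
    rw [Real.one_lt_rpow_iff (by norm_num)]
    exact Or.inl ⟨one_lt_two, hp⟩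
  have hex : ∃ t1, b ≤ t1 ∧ 0 < h t1 := by
    by_contra hc
    push_neg at hc
    have hzero : ∀ t, b ≤ t → h t = 0 := fun t ht =>
      le_antisymm (hc t ht) (hpos t (le_trans hb ht))
    have hz : Tendsto (fun t => h (2*t)/h t) atTop (𝓝 (0:ℝ)) := by
      have he : (fun t => h (2*t)/h t) =ᶠ[atTop] fun _ => (0:ℝ) := by
        filter_upwards [eventually_ge_atTop (max b 0)] with t ht
        have hbt : b ≤ t := le_trans (le_max_left _ _) ht
        rw [hzero t hbt]; simp
      exact Tendsto.congr' he.symm tendsto_const_nhds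
    have := tendsto_nhds_unique hrv2 hz
    linarith
  obtain ⟨t1, ht1b, ht1pos⟩ := hex
  set q : ℝ := (1 + (2:ℝ)^p)/2 with hq
  have hq1 : 1 < q := by rw [hq]; linarith
  have hqlt : q < (2:ℝ)^p := by rw [hq]; linarith
  have hev : ∀ᶠ t in atTop, q < h (2*t)/h t := hrv2.eventually (eventually_gt_nhds hqlt)
  obtain ⟨T0, hT0⟩ := eventually_atTop.mp hev
  set T := max T0 t1 with hT
  have hTt1 : t1 ≤ T := le_max_right _ _
  have hTb : b ≤ T := le_trans ht1b hTt1
  have hT0le : T0 ≤ T := le_max_left _ _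
  have hT0' : 0 ≤ T := le_trans hb hTb
  have hTpos : 0 < h T :=
    lt_of_lt_of_le ht1pos (hm (Set.mem_Ici.mpr ht1b) (Set.mem_Ici.mpr hTb) hTt1)
  have hstep : ∀ t, T ≤ t → q * h t < h (2*t) := by
    intro t ht
    have hht : 0 < h t :=
      lt_of_lt_of_le hTpos (hm (Set.mem_Ici.mpr hTb) (Set.mem_Ici.mpr (hTb.trans ht)) ht)
    have := hT0 t (hT0le.trans ht)
    exact (lt_div_iff₀ hht).mp this
  have hkey : ∀ k : ℕ, ∀ t, T ≤ t → q^k * h t ≤ h (2^k * t) := by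
    intro k
    induction k with
    | zero => intro t ht; simp
    | succ k ih =>
      intro t ht
      have ht0 : 0 ≤ t := hT0'.trans ht
      have h2t : T ≤ 2*t := le_trans ht (by nlinarith)
      have hht : 0 < h t :=
        lt_of_lt_of_le hTpos (hm (Set.mem_Ici.mpr hTb) (Set.mem_Ici.mpr (hTb.trans ht)) ht)
      have hqk : (0:ℝ) ≤ q^k := pow_nonneg (by linarith) k
      have hs1 := (hstep t ht).le
      calc q^(k+1) * h t = q^k * (q * h t) := by ring
      _ ≤ q^k * h (2*t) := by nlinarith
      _ ≤ h (2^k * (2*t)) := ih (2*t) h2t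
      _ = h (2^(k+1) * t) := by rw [show (2:ℝ)^k * (2*t) = 2^(k+1)*t by ring]
  rw [tendsto_atTop]
  intro M
  obtain ⟨k, hk⟩ : ∃ k : ℕ, M ≤ q^k * h T := by
    obtain ⟨k, hk⟩ := pow_unbounded_of_one_lt (M / h T) hq1
    exact ⟨k, by rw [div_lt_iff₀ hTpos] at hk; linarith⟩
  have h1 : (1:ℝ) ≤ 2^k := one_le_pow₀ one_le_two
  have hTt : T ≤ 2^k*T := le_mul_of_one_le_left hT0' h1
  filter_upwards [eventually_ge_atTop ((2:ℝ)^k * T)] with t ht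
  have h2 : h (2^k * T) ≤ h t :=
    hm (Set.mem_Ici.mpr (hTb.trans hTt)) (Set.mem_Ici.mpr (hTb.trans (hTt.trans ht))) ht
  have h3 := hkey k T le_rfl
  linarith

lemma inv_atTop {h hs : ℝ → ℝ} (htop : Tendsto h atTop atTop)
    {bs : ℝ} (hsm : MonotoneOn hs (Set.Ici bs))
    (hinv2 : Tendsto (fun t => hs (h t) / t) atTop (𝓝 1)) :
    Tendsto hs atTop atTop := by
  have hcomp : Tendsto (fun t => hs (h t)) atTop atTop := by
    have hev2 : (fun t : ℝ => t/2) ≤ᶠ[atTop] fun t => hs (h t) := by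
      filter_upwards [hinv2.eventually (eventually_gt_nhds (by norm_num : (1:ℝ)/2 < 1)),
        eventually_gt_atTop (0:ℝ)] with t h1 h2
      have := (lt_div_iff₀ h2).mp h1
      linarith
    exact tendsto_atTop_mono' atTop hev2 (tendsto_id.atTop_div_const (by norm_num))
  rw [tendsto_atTop]
  intro M
  obtain ⟨t0, ht0⟩ := ((htop.eventually_ge_atTop bs).and (hcomp.eventually_ge_atTop M)).exists
  filter_upwards [eventually_ge_atTop (h t0)] with s hsge
  exact le_trans ht0.2 (hsm (Set.mem_Ici.mpr ht0.1) (Set.mem_Ici.mpr (ht0.1.trans hsge)) hsge)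

/-! ### Counting function facts -/

section Counting
variable {l : ℕ → ℝ}

lemma Nfin (hto : Tendsto l atTop (𝓝 0)) {x : ℝ} (hx : 0 < x) :
    {j : ℕ | x < l j}.Finite := by
  have hev : ∀ᶠ j in atTop, l j < x := hto.eventually (eventually_lt_nhds hx)
  obtain ⟨n, hn⟩ := eventually_atTop.mp hev
  apply (Set.finite_Iio n).subset
  intro j hj
  simp only [Set.mem_Iio]
  by_contra hjn
  exact absurd hj (not_lt.mpr (hn j (not_lt.mp hjn)).le)

lemma Ncard_eq (l : ℕ → ℝ) (x : ℝ) :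
    Nat.card {j : ℕ // x < l j} = {j : ℕ | x < l j}.ncard :=
  Nat.card_coe_set_eq _

lemma ncard_Iio (n : ℕ) : (Set.Iio n).ncard = n := by
  simp [Set.ncard_eq_toFinset_card']

lemma ncard_Iic (n : ℕ) : (Set.Iic n).ncard = n + 1 := by
  simp [Set.ncard_eq_toFinset_card']

lemma N_le_of (hanti : Antitone l) {x : ℝ} {n : ℕ} (hxn : l n ≤ x) :
    Nat.card {j : ℕ // x < l j} ≤ n := by
  rw [Ncard_eq]
  have hsub : {j : ℕ | x < l j} ⊆ Set.Iio n := by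
    intro j hj
    simp only [Set.mem_setOf_eq] at hj
    simp only [Set.mem_Iio]
    by_contra hjn
    exact absurd hj (not_lt.mpr ((hanti (not_lt.mp hjn)).trans hxn))
  calc {j : ℕ | x < l j}.ncard ≤ (Set.Iio n).ncard :=
        Set.ncard_le_ncard hsub (Set.finite_Iio n)
  _ = n := ncard_Iio n

lemma le_N (hanti : Antitone l) (hto : Tendsto l atTop (𝓝 0))
    {x : ℝ} {n : ℕ} (hx : 0 < x) (hxn : x < l n) :
    n + 1 ≤ Nat.card {j : ℕ // x < l j} := by
  rw [Ncard_eq]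
  have hsub : Set.Iic n ⊆ {j : ℕ | x < l j} := by
    intro i hi
    simp only [Set.mem_Iic] at hi
    exact lt_of_lt_of_le hxn (hanti hi)
  calc n + 1 = (Set.Iic n).ncard := (ncard_Iic n).symm
  _ ≤ {j : ℕ | x < l j}.ncard := Set.ncard_le_ncard hsub (Nfin hto hx)

lemma l_N_le (hanti : Antitone l) (hto : Tendsto l atTop (𝓝 0)) {x : ℝ} (hx : 0 < x) :
    l (Nat.card {j : ℕ // x < l j}) ≤ x := by
  by_contra hc
  push_neg at hc
  have := le_N hanti hto hx hc
  omega

lemma lt_l_N_sub (hanti : Antitone l) {x : ℝ} (hx : 0 < x)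
    (h1 : 1 ≤ Nat.card {j : ℕ // x < l j}) :
    x < l (Nat.card {j : ℕ // x < l j} - 1) := by
  by_contra hc
  push_neg at hc
  have := N_le_of hanti hc
  omega

lemma N_tendsto (hanti : Antitone l) (hto : Tendsto l atTop (𝓝 0))
    (hlpos : ∀ j, 0 < l j) :
    Tendsto (fun x : ℝ => Nat.card {j : ℕ // x < l j}) (𝓝[>](0:ℝ)) atTop := by
  rw [tendsto_atTop]
  intro m
  have hmem : Set.Ioo (0:ℝ) (l m) ∈ 𝓝[>] (0:ℝ) :=
    Ioo_mem_nhdsGT_of_mem ⟨le_refl 0, hlpos m⟩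
  filter_upwards [hmem] with x hx
  have := le_N hanti hto hx.1 hx.2
  omega

end Counting

/-! ### limsup/liminf helpers -/

lemma limsup_le_aux {α : Type*} {f : Filter α} [f.NeBot] {u g : α → ℝ} {c : ℝ}
    (hle : ∀ᶠ a in f, u a ≤ g a) (hg : Tendsto g f (𝓝 c)) :
    limsup (fun a => ENNReal.ofReal (u a)) f ≤ ENNReal.ofReal c := by
  have h1 : limsup (fun a => ENNReal.ofReal (u a)) f
      ≤ limsup (fun a => ENNReal.ofReal (g a)) f :=
    limsup_le_limsup (hle.mono fun a ha => ENNReal.ofReal_le_ofReal ha)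
  rwa [(ENNReal.tendsto_ofReal hg).limsup_eq] at h1

lemma le_liminf_aux {α : Type*} {f : Filter α} [f.NeBot] {u g : α → ℝ} {c : ℝ}
    (hle : ∀ᶠ a in f, g a ≤ u a) (hg : Tendsto g f (𝓝 c)) :
    ENNReal.ofReal c ≤ liminf (fun a => ENNReal.ofReal (u a)) f := by
  have h1 : liminf (fun a => ENNReal.ofReal (g a)) f
      ≤ liminf (fun a => ENNReal.ofReal (u a)) f :=
    liminf_le_liminf (hle.mono fun a ha => ENNReal.ofReal_le_ofReal ha)
  rwa [(ENNReal.tendsto_ofReal hg).liminf_eq] at h1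

lemma rpow_invp {p : ℝ} (hp : 0 < p) (x : ℝ≥0∞) : (x^(1/p))^p = x := by
  rw [← ENNReal.rpow_mul, one_div, inv_mul_cancel₀ hp.ne', ENNReal.rpow_one]

lemma real_rpow_pinv {p : ℝ} (hp : 0 < p) {c : ℝ} (hc : 0 ≤ c) : (c^p)^(1/p) = c := by
  rw [← Real.rpow_mul hc, mul_one_div, div_self hp.ne', Real.rpow_one]


/-! ### Key transfer inequalities (case where all eigenvalues are positive) -/

section Key
variable {p : ℝ} {h hs : ℝ → ℝ} {l : ℕ → ℝ}

lemma keyA (hp : 0 < p)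
    {bs : ℝ} (hsm : MonotoneOn hs (Set.Ici bs))
    (hsrv : ∀ L : ℝ, 0 < L → Tendsto (fun t => hs (L * t) / hs t) atTop (𝓝 (L ^ (1 / p))))
    (hinv2 : Tendsto (fun t => hs (h t) / t) atTop (𝓝 1))
    (htop : Tendsto h atTop atTop)
    (hanti : Antitone l) (hto : Tendsto l atTop (𝓝 0)) (hlpos : ∀ j, 0 < l j)
    {A a : ℝ} (hA : 0 < A) (ha : 0 < a) (ha1 : a < 1)
    (hev : ∀ᶠ x in 𝓝[>](0:ℝ), (Nat.card {j : ℕ // x < l j} : ℝ) < A * h x⁻¹) :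
    limsup (fun j : ℕ => ENNReal.ofReal (hs j * l j)) atTop
      ≤ ENNReal.ofReal (A^(1/p) * 1 * (1/a)) := by
  set t : ℕ → ℝ := fun j => (a * l j)⁻¹ with htdef
  have hal : Tendsto (fun j => a * l j) atTop (𝓝[>] (0:ℝ)) := by
    rw [tendsto_nhdsWithin_iff]
    constructor
    · simpa using hto.const_mul a
    · exact Eventually.of_forall fun j => mul_pos ha (hlpos j)
  have htt : Tendsto t atTop atTop := tendsto_inv_nhdsGT_zero.comp hal
  have hht : Tendsto (fun j => h (t j)) atTop atTop := htop.comp htt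
  have hjA : ∀ᶠ j : ℕ in atTop, (j:ℝ) ≤ A * h (t j) := by
    filter_upwards [hal.eventually hev] with j hj
    have hN : j + 1 ≤ Nat.card {i : ℕ // a * l j < l i} :=
      le_N hanti hto (mul_pos ha (hlpos j)) (by nlinarith [hlpos j])
    have hN' : ((j:ℝ)+1) ≤ (Nat.card {i : ℕ // a * l j < l i} : ℝ) := by exact_mod_cast hN
    have : (Nat.card {i : ℕ // a * l j < l i} : ℝ) < A * h (t j) := hj
    linarith
  have hsmono_ev : ∀ᶠ j : ℕ in atTop, hs j ≤ hs (A * h (t j)) := by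
    filter_upwards [hjA, tendsto_natCast_atTop_atTop.eventually_ge_atTop bs] with j h1 h2
    exact hsm (Set.mem_Ici.mpr h2) (Set.mem_Ici.mpr (h2.trans h1)) h1
  set R : ℕ → ℝ := fun j => hs (A * h (t j)) / hs (h (t j)) with hRdef
  set S : ℕ → ℝ := fun j => hs (h (t j)) / t j with hSdef
  have hR : Tendsto R atTop (𝓝 (A ^ (1/p))) := (hsrv A hA).comp hht
  have hS : Tendsto S atTop (𝓝 1) := hinv2.comp htt
  have hSpos : ∀ᶠ j in atTop, 0 < hs (h (t j)) := by
    filter_upwards [hS.eventually (eventually_gt_nhds (by norm_num : (0:ℝ) < 1)),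
      htt.eventually_gt_atTop 0] with j h1 h2
    rcases div_pos_iff.mp h1 with ⟨hh, _⟩ | ⟨_, hh⟩
    · exact hh
    · exact absurd h2 (not_lt.mpr hh.le)
  have hmain : ∀ᶠ j : ℕ in atTop, hs j * l j ≤ R j * S j * (1/a) := by
    filter_upwards [hsmono_ev, hSpos, htt.eventually_gt_atTop 0] with j h1 h2 h3
    have hlj := hlpos j
    have heq : R j * S j * (1/a) = hs (A * h (t j)) * l j := by
      rw [hRdef, hSdef]
      have h4 : hs (h (t j)) ≠ 0 := ne_of_gt h2
      have h5 : t j = (a * l j)⁻¹ := rfl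
      have h4' : hs (h (1 / (a * l j))) ≠ 0 := by rw [one_div]; exact h4
      field_simp [h5]
      have h6 : t j * (a * l j) = 1 := by rw [h5]; exact inv_mul_cancel₀ (mul_pos ha hlj).ne'
      linear_combination (-hs (A * h (t j))) * h6
    rw [heq]
    exact mul_le_mul_of_nonneg_right h1 hlj.le
  have hlim : Tendsto (fun j => R j * S j * (1/a)) atTop (𝓝 (A^(1/p) * 1 * (1/a))) :=
    (hR.mul hS).mul_const (1/a)
  exact limsup_le_aux hmain hlim

lemma keyB (hp : 0 < p)
    {bs : ℝ} (hsm : MonotoneOn hs (Set.Ici bs))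
    (hsrv : ∀ L : ℝ, 0 < L → Tendsto (fun t => hs (L * t) / hs t) atTop (𝓝 (L ^ (1 / p))))
    (hinv2 : Tendsto (fun t => hs (h t) / t) atTop (𝓝 1))
    (htop : Tendsto h atTop atTop)
    (hanti : Antitone l) (hto : Tendsto l atTop (𝓝 0)) (hlpos : ∀ j, 0 < l j)
    {A : ℝ} (hA : 0 < A)
    (hev : ∀ᶠ x in 𝓝[>](0:ℝ), A * h x⁻¹ < (Nat.card {j : ℕ // x < l j} : ℝ)) :
    ENNReal.ofReal (A^(1/p) * 1)
      ≤ liminf (fun j : ℕ => ENNReal.ofReal (hs j * l j)) atTop := by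
  set t : ℕ → ℝ := fun j => (l j)⁻¹ with htdef
  have hal : Tendsto l atTop (𝓝[>] (0:ℝ)) := by
    rw [tendsto_nhdsWithin_iff]
    exact ⟨hto, Eventually.of_forall fun j => hlpos j⟩
  have htt : Tendsto t atTop atTop := tendsto_inv_nhdsGT_zero.comp hal
  have hht : Tendsto (fun j => h (t j)) atTop atTop := htop.comp htt
  have hAh : Tendsto (fun j => A * h (t j)) atTop atTop := hht.const_mul_atTop hA
  have hjA : ∀ᶠ j : ℕ in atTop, A * h (t j) ≤ (j:ℝ) := by
    filter_upwards [hal.eventually hev] with j hj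
    have hN : Nat.card {i : ℕ // l j < l i} ≤ j := N_le_of hanti le_rfl
    have hN' : (Nat.card {i : ℕ // l j < l i} : ℝ) ≤ (j:ℝ) := by exact_mod_cast hN
    have : A * h (t j) < (Nat.card {i : ℕ // l j < l i} : ℝ) := hj
    linarith
  have hsmono_ev : ∀ᶠ j : ℕ in atTop, hs (A * h (t j)) ≤ hs j := by
    filter_upwards [hjA, hAh.eventually_ge_atTop bs] with j h1 h2
    exact hsm (Set.mem_Ici.mpr h2) (Set.mem_Ici.mpr (h2.trans h1)) h1
  set R : ℕ → ℝ := fun j => hs (A * h (t j)) / hs (h (t j)) with hRdef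
  set S : ℕ → ℝ := fun j => hs (h (t j)) / t j with hSdef
  have hR : Tendsto R atTop (𝓝 (A ^ (1/p))) := (hsrv A hA).comp hht
  have hS : Tendsto S atTop (𝓝 1) := hinv2.comp htt
  have hSpos : ∀ᶠ j in atTop, 0 < hs (h (t j)) := by
    filter_upwards [hS.eventually (eventually_gt_nhds (by norm_num : (0:ℝ) < 1)),
      htt.eventually_gt_atTop 0] with j h1 h2
    rcases div_pos_iff.mp h1 with ⟨hh, _⟩ | ⟨_, hh⟩
    · exact hh
    · exact absurd h2 (not_lt.mpr hh.le)
  have hmain : ∀ᶠ j : ℕ in atTop, R j * S j ≤ hs j * l j := by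
    filter_upwards [hsmono_ev, hSpos, htt.eventually_gt_atTop 0] with j h1 h2 h3
    have hlj := hlpos j
    have heq : R j * S j = hs (A * h (t j)) * l j := by
      rw [hRdef, hSdef]
      have h4 : hs (h (t j)) ≠ 0 := ne_of_gt h2
      have h5 : t j = (l j)⁻¹ := rfl
      have h4' : hs (h (1 / l j)) ≠ 0 := by rw [one_div]; exact h4
      field_simp [h5]
      have h6 : t j * l j = 1 := by rw [h5]; exact inv_mul_cancel₀ hlj.ne'
      linear_combination (-hs (A * h (t j))) * h6
    rw [heq]
    exact mul_le_mul_of_nonneg_right h1 hlj.le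
  have hlim : Tendsto (fun j => R j * S j) atTop (𝓝 (A^(1/p) * 1)) := hR.mul hS
  exact le_liminf_aux hmain hlim

lemma keyC (hp : 0 < p)
    {bh : ℝ} (hmh : MonotoneOn h (Set.Ici bh))
    (hrv : ∀ L : ℝ, 0 < L → Tendsto (fun t => h (L * t) / h t) atTop (𝓝 (L ^ p)))
    (hinv1 : Tendsto (fun t => h (hs t) / t) atTop (𝓝 1))
    (htop : Tendsto h atTop atTop) (hstop : Tendsto hs atTop atTop)
    (hanti : Antitone l) (hto : Tendsto l atTop (𝓝 0)) (hlpos : ∀ j, 0 < l j)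
    {B ε : ℝ} (hB : 0 < B) (hε : 0 < ε)
    (hev : ∀ᶠ j : ℕ in atTop, hs j * l j < B) :
    limsup (fun x : ℝ => ENNReal.ofReal ((Nat.card {j : ℕ // x < l j} : ℝ) / h x⁻¹))
        (𝓝[>] (0:ℝ))
      ≤ ENNReal.ofReal ((1+ε) * B^p + 0) := by
  have hNN : Tendsto (fun x : ℝ => Nat.card {j : ℕ // x < l j}) (𝓝[>](0:ℝ)) atTop :=
    N_tendsto hanti hto hlpos
  have hn1 : Tendsto (fun x : ℝ => Nat.card {j : ℕ // x < l j} - 1) (𝓝[>](0:ℝ)) atTop :=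
    (tendsto_sub_atTop_nat 1).comp hNN
  have hinvx : Tendsto (fun x : ℝ => x⁻¹) (𝓝[>](0:ℝ)) atTop := tendsto_inv_nhdsGT_zero
  have hhx : Tendsto (fun x : ℝ => h x⁻¹) (𝓝[>](0:ℝ)) atTop := htop.comp hinvx
  have hBx : Tendsto (fun x : ℝ => B * x⁻¹) (𝓝[>](0:ℝ)) atTop := hinvx.const_mul_atTop hB
  -- eventual facts along ℕ
  have hnat : ∀ᶠ n : ℕ in atTop,
      hs n * l n < B ∧ (n:ℝ) < (1+ε) * h (hs n) ∧ bh ≤ hs n := by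
    have hr : Tendsto (fun t : ℝ => (1+ε) * (h (hs t)/t)) atTop (𝓝 ((1+ε) * 1)) :=
      hinv1.const_mul (1+ε)
    have h1 : ∀ᶠ t : ℝ in atTop, t < (1+ε) * h (hs t) := by
      filter_upwards [hr.eventually (eventually_gt_nhds (by nlinarith : (1:ℝ) < (1+ε)*1)),
        eventually_gt_atTop (0:ℝ)] with t h1 h2
      have h3 : 1 * t < ((1+ε) * (h (hs t)/t)) * t := by
        exact mul_lt_mul_of_pos_right h1 h2
      calc t = 1 * t := (one_mul t).symm
      _ < ((1+ε) * (h (hs t)/t)) * t := h3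
      _ = (1+ε) * h (hs t) := by field_simp
    have h2 : ∀ᶠ n : ℕ in atTop, (n:ℝ) < (1+ε) * h (hs n) :=
      tendsto_natCast_atTop_atTop.eventually h1
    have h3 : ∀ᶠ n : ℕ in atTop, bh ≤ hs n :=
      (hstop.comp tendsto_natCast_atTop_atTop).eventually_ge_atTop bh
    exact hev.and (h2.and h3) |>.mono fun n ⟨a, b, c⟩ => ⟨a, b, c⟩
  -- now the pointwise bound
  set g : ℝ → ℝ := fun x => (1+ε) * (h (B*x⁻¹)/h x⁻¹) + 1/h x⁻¹ with hgdef
  have hglim : Tendsto g (𝓝[>](0:ℝ)) (𝓝 ((1+ε) * B^p + 0)) := by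
    apply Tendsto.add
    · exact ((hrv B hB).comp hinvx).const_mul (1+ε)
    · have := hhx.inv_tendsto_atTop
      exact this.congr (fun x => (one_div _).symm)
  have hle : ∀ᶠ x in 𝓝[>](0:ℝ),
      (Nat.card {j : ℕ // x < l j} : ℝ) / h x⁻¹ ≤ g x := by
    filter_upwards [self_mem_nhdsWithin, hn1.eventually hnat,
      hNN.eventually_ge_atTop 1, hBx.eventually_ge_atTop bh,
      hhx.eventually_gt_atTop 0] with x hx0 hn hN1 hbh hh0
    set n := Nat.card {j : ℕ // x < l j} - 1 with hndef
    obtain ⟨e1, e2, e3⟩ := hn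
    have hx : (0:ℝ) < x := hx0
    have hxl : x < l n := lt_l_N_sub hanti hx hN1
    have hsn : hs n ≤ B * x⁻¹ := by
      have hln : 0 < l n := hlpos n
      have h4 : hs n < B / l n := (lt_div_iff₀ hln).mpr (by linarith [e1])
      have h5 : B / l n ≤ B / x := div_le_div_of_nonneg_left hB.le hx hxl.le
      have h6 : hs ↑n ≤ B / x := le_trans h4.le h5
      rwa [div_eq_mul_inv] at h6
    have hmono : h (hs n) ≤ h (B * x⁻¹) :=
      hmh (Set.mem_Ici.mpr e3) (Set.mem_Ici.mpr (e3.trans hsn)) hsn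
    have hcard : (Nat.card {j : ℕ // x < l j} : ℝ) = (n:ℝ) + 1 := by
      rw [hndef]
      have := hN1
      push_cast [Nat.cast_sub hN1]
      ring
    have hnum : (Nat.card {j : ℕ // x < l j} : ℝ) ≤ (1+ε) * h (B*x⁻¹) + 1 := by
      rw [hcard]
      have : (n:ℝ) < (1+ε) * h (B*x⁻¹) := lt_of_lt_of_le e2 (by nlinarith)
      linarith
    calc (Nat.card {j : ℕ // x < l j} : ℝ) / h x⁻¹
        ≤ ((1+ε) * h (B*x⁻¹) + 1) / h x⁻¹ := by
          exact div_le_div_of_nonneg_right hnum hh0.le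
      _ = g x := by rw [hgdef]; field_simp
  exact limsup_le_aux hle hglim

lemma keyD (hp : 0 < p)
    {bh : ℝ} (hmh : MonotoneOn h (Set.Ici bh))
    (hrv : ∀ L : ℝ, 0 < L → Tendsto (fun t => h (L * t) / h t) atTop (𝓝 (L ^ p)))
    (hinv1 : Tendsto (fun t => h (hs t) / t) atTop (𝓝 1))
    (htop : Tendsto h atTop atTop)
    (hanti : Antitone l) (hto : Tendsto l atTop (𝓝 0)) (hlpos : ∀ j, 0 < l j)
    {B ε : ℝ} (hB : 0 < B) (hε : 0 < ε)
    (hev : ∀ᶠ j : ℕ in atTop, B < hs j * l j) :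
    ENNReal.ofReal (B^p / (1+ε))
      ≤ liminf (fun x : ℝ => ENNReal.ofReal ((Nat.card {j : ℕ // x < l j} : ℝ) / h x⁻¹))
          (𝓝[>] (0:ℝ)) := by
  have hNN : Tendsto (fun x : ℝ => Nat.card {j : ℕ // x < l j}) (𝓝[>](0:ℝ)) atTop :=
    N_tendsto hanti hto hlpos
  have hinvx : Tendsto (fun x : ℝ => x⁻¹) (𝓝[>](0:ℝ)) atTop := tendsto_inv_nhdsGT_zero
  have hhx : Tendsto (fun x : ℝ => h x⁻¹) (𝓝[>](0:ℝ)) atTop := htop.comp hinvx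
  have hBx : Tendsto (fun x : ℝ => B * x⁻¹) (𝓝[>](0:ℝ)) atTop := hinvx.const_mul_atTop hB
  have hnat : ∀ᶠ n : ℕ in atTop, B < hs n * l n ∧ h (hs n) < (1+ε) * (n:ℝ) := by
    have h1 : ∀ᶠ t : ℝ in atTop, h (hs t) < (1+ε) * t := by
      filter_upwards [hinv1.eventually (eventually_lt_nhds (by linarith : (1:ℝ) < 1+ε)),
        eventually_gt_atTop (0:ℝ)] with t h1 h2
      have := (div_lt_iff₀ h2).mp h1
      linarith [this]
    have h2 : ∀ᶠ n : ℕ in atTop, h (hs n) < (1+ε) * (n:ℝ) :=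
      tendsto_natCast_atTop_atTop.eventually h1
    exact hev.and h2
  set g : ℝ → ℝ := fun x => h (B*x⁻¹)/h x⁻¹/(1+ε) with hgdef
  have hglim : Tendsto g (𝓝[>](0:ℝ)) (𝓝 (B^p/(1+ε))) :=
    ((hrv B hB).comp hinvx).div_const (1+ε)
  have hle : ∀ᶠ x in 𝓝[>](0:ℝ),
      g x ≤ (Nat.card {j : ℕ // x < l j} : ℝ) / h x⁻¹ := by
    filter_upwards [self_mem_nhdsWithin, hNN.eventually hnat,
      hBx.eventually_ge_atTop bh, hhx.eventually_gt_atTop 0] with x hx0 hn hbh hh0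
    set m := Nat.card {j : ℕ // x < l j} with hmdef
    obtain ⟨e1, e2⟩ := hn
    have hx : (0:ℝ) < x := hx0
    have hlm : l m ≤ x := l_N_le hanti hto hx
    have hsm' : B * x⁻¹ ≤ hs m := by
      have hlmp : 0 < l m := hlpos m
      have h4 : B / l m < hs m := (div_lt_iff₀ hlmp).mpr (by linarith [e1])
      have h5 : B / x ≤ B / l m := div_le_div_of_nonneg_left hB.le hlmp hlm
      have h6 : B / x ≤ hs ↑m := le_trans h5 h4.le
      rwa [div_eq_mul_inv] at h6
    have hmono : h (B * x⁻¹) ≤ h (hs m) :=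
      hmh (Set.mem_Ici.mpr hbh) (Set.mem_Ici.mpr (hbh.trans hsm')) hsm'
    have h7 : h (B*x⁻¹)/(1+ε) ≤ (m:ℝ) := by
      rw [div_le_iff₀ (by linarith : (0:ℝ) < 1+ε)]
      nlinarith
    calc g x = (h (B*x⁻¹)/(1+ε))/h x⁻¹ := by rw [hgdef]; ring
    _ ≤ (m:ℝ)/h x⁻¹ := div_le_div_of_nonneg_right h7 hh0.le
  exact le_liminf_aux hle hglim

end Key

end CFET

/-- Transfer between eigenvalue and counting-function asymptotics: if `h` is `RV_p` (`p > 0`)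
with asymptotic `RV_{1/p}` inverse `h♯`, and `(λ_j)` is a non-increasing nonnegative null
sequence with counting function `N(λ) = #{j : λ_j > λ}`, then
`limsup_j h♯(j) λ_j = [limsup_{λ→0+} N(λ)/h(λ⁻¹)]^{1/p}`, similarly for `liminf`,
and `lim_{λ→0+} N(λ)/h(λ⁻¹) = c` iff `lim_j h♯(j) λ_j = c^{1/p}`. -/
theorem counting_function_eigenvalue_transfer (p : ℝ) (hp : 0 < p) (h hs : ℝ → ℝ)
    (hpos : ∀ t ∈ Set.Ici (0:ℝ), 0 ≤ h t) (hspos : ∀ t ∈ Set.Ici (0:ℝ), 0 ≤ hs t)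
    (hmono : ∃ b ≥ (0:ℝ), MonotoneOn h (Set.Ici b))
    (hsmono : ∃ b ≥ (0:ℝ), MonotoneOn hs (Set.Ici b))
    (hrv : ∀ l : ℝ, 0 < l → Tendsto (fun t => h (l * t) / h t) atTop (𝓝 (l ^ p)))
    (hsrv : ∀ l : ℝ, 0 < l → Tendsto (fun t => hs (l * t) / hs t) atTop (𝓝 (l ^ (1 / p))))
    (hinv1 : Tendsto (fun t => h (hs t) / t) atTop (𝓝 1))
    (hinv2 : Tendsto (fun t => hs (h t) / t) atTop (𝓝 1))
    (l : ℕ → ℝ) (hl0 : ∀ j, 0 ≤ l j) (hanti : Antitone l)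
    (hto : Tendsto l atTop (𝓝 0)) :
    (limsup (fun j : ℕ => ENNReal.ofReal (hs j * l j)) atTop
      = (limsup (fun x : ℝ => ENNReal.ofReal ((Nat.card {j : ℕ // x < l j} : ℝ) / h x⁻¹))
          (𝓝[>] (0:ℝ))) ^ (1 / p)) ∧
    (liminf (fun j : ℕ => ENNReal.ofReal (hs j * l j)) atTop
      = (liminf (fun x : ℝ => ENNReal.ofReal ((Nat.card {j : ℕ // x < l j} : ℝ) / h x⁻¹))
          (𝓝[>] (0:ℝ))) ^ (1 / p)) ∧
    ∀ c : ℝ, 0 ≤ c →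
      (Tendsto (fun x : ℝ => (Nat.card {j : ℕ // x < l j} : ℝ) / h x⁻¹)
          (𝓝[>] (0:ℝ)) (𝓝 c)
        ↔ Tendsto (fun j : ℕ => hs j * l j) atTop (𝓝 (c ^ (1 / p)))) := by
  obtain ⟨bh, hbh, hmh⟩ := hmono
  obtain ⟨bs, hbs, hsm⟩ := hsmono
  have htop : Tendsto h atTop atTop := CFET.rv_atTop hp hpos hbh hmh (hrv 2 two_pos)
  have hstop : Tendsto hs atTop atTop := CFET.inv_atTop htop hsm hinv2
  have h1p : (0:ℝ) < 1/p := by positivity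
  set F := fun j : ℕ => ENNReal.ofReal (hs j * l j) with hF
  set G := fun x : ℝ => ENNReal.ofReal ((Nat.card {j : ℕ // x < l j} : ℝ) / h x⁻¹) with hG
  have hFnn : ∀ j : ℕ, 0 ≤ hs j * l j := fun j =>
    mul_nonneg (hspos _ (Set.mem_Ici.mpr (Nat.cast_nonneg j))) (hl0 j)
  have hGnn : ∀ x : ℝ, 0 < x → 0 ≤ (Nat.card {j : ℕ // x < l j} : ℝ) / h x⁻¹ := fun x hx =>
    div_nonneg (Nat.cast_nonneg _) (hpos _ (Set.mem_Ici.mpr (inv_nonneg.mpr hx.le)))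
  have hhx : Tendsto (fun x : ℝ => h x⁻¹) (𝓝[>](0:ℝ)) atTop :=
    htop.comp tendsto_inv_nhdsGT_zero
  have key : limsup F atTop = (limsup G (𝓝[>](0:ℝ)))^(1/p)
      ∧ liminf F atTop = (liminf G (𝓝[>](0:ℝ)))^(1/p) := by
    by_cases hcase : ∀ j, 0 < l j
    · -- all eigenvalues positive
      have hlpos := hcase
      have hup : limsup F atTop ≤ (limsup G (𝓝[>](0:ℝ)))^(1/p) := by
        apply le_of_forall_gt_imp_ge_of_dense
        intro C hC
        rcases eq_or_ne C ⊤ with rfl | hCtop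
        · exact le_top
        have hC0 : 0 < C := lt_of_le_of_lt zero_le hC
        set c := C.toReal with hcdef
        have hc0 : 0 < c := ENNReal.toReal_pos hC0.ne' hCtop
        have hceq : C = ENNReal.ofReal c := (ENNReal.ofReal_toReal hCtop).symm
        have hcp : (0:ℝ) < c^p := Real.rpow_pos_of_pos hc0 p
        have hν : limsup G (𝓝[>](0:ℝ)) < ENNReal.ofReal (c^p) := by
          have e1 : limsup G (𝓝[>](0:ℝ)) = ((limsup G (𝓝[>](0:ℝ)))^(1/p))^p :=
            (CFET.rpow_invp hp _).symm
          rw [e1, ← ENNReal.ofReal_rpow_of_pos hc0]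
          exact ENNReal.rpow_lt_rpow (hC.trans_eq hceq) hp
        obtain ⟨A0, hA0nn, hA0l, hA0r⟩ := ENNReal.lt_iff_exists_real_btwn.mp hν
        have hA0c : A0 < c^p := (ENNReal.ofReal_lt_ofReal_iff hcp).mp hA0r
        set A := max A0 (c^p/2) with hAdef
        have hApos : 0 < A := lt_of_lt_of_le (by positivity) (le_max_right _ _)
        have hAc : A < c^p := max_lt hA0c (by linarith)
        have hνA : limsup G (𝓝[>](0:ℝ)) < ENNReal.ofReal A :=
          hA0l.trans_le (ENNReal.ofReal_le_ofReal (le_max_left _ _))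
        have hA1p : A^(1/p) < c := by
          have h2 := Real.rpow_lt_rpow hApos.le hAc h1p
          rwa [CFET.real_rpow_pinv hp hc0.le] at h2
        set q := A^(1/p)/c with hqdef
        have hqnn : 0 ≤ q := by positivity
        have hq1 : q < 1 := (div_lt_one hc0).mpr hA1p
        set a := (q+1)/2 with hadef
        have ha : 0 < a := by rw [hadef]; linarith
        have ha1 : a < 1 := by rw [hadef]; linarith
        have hfin : A^(1/p) * 1 * (1/a) ≤ c := by
          have hqa : q < a := by rw [hadef]; linarith
          have hAq : A^(1/p) = q * c := by rw [hqdef]; field_simp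
          rw [mul_one, hAq, mul_one_div, div_le_iff₀ ha]
          nlinarith
        have hevA : ∀ᶠ x in 𝓝[>](0:ℝ), (Nat.card {j : ℕ // x < l j} : ℝ) < A * h x⁻¹ := by
          filter_upwards [eventually_lt_of_limsup_lt hνA, self_mem_nhdsWithin,
            hhx.eventually_gt_atTop 0] with x h1 h2 h3
          simp only [hG] at h1
          have h4 : (Nat.card {j : ℕ // x < l j} : ℝ) / h x⁻¹ < A :=
            (ENNReal.ofReal_lt_ofReal_iff hApos).mp h1
          exact (div_lt_iff₀ h3).mp h4
        calc limsup F atTop ≤ ENNReal.ofReal (A^(1/p) * 1 * (1/a)) := by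
              rw [hF]
              exact CFET.keyA hp hsm hsrv hinv2 htop hanti hto hlpos hApos ha ha1 hevA
        _ ≤ ENNReal.ofReal c := ENNReal.ofReal_le_ofReal hfin
        _ = C := hceq.symm
      have hup2 : (limsup G (𝓝[>](0:ℝ)))^(1/p) ≤ limsup F atTop := by
        apply le_of_forall_gt_imp_ge_of_dense
        intro C hC
        rcases eq_or_ne C ⊤ with rfl | hCtop
        · exact le_top
        have hC0 : 0 < C := lt_of_le_of_lt zero_le hC
        set c := C.toReal with hcdef
        have hc0 : 0 < c := ENNReal.toReal_pos hC0.ne' hCtop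
        have hceq : C = ENNReal.ofReal c := (ENNReal.ofReal_toReal hCtop).symm
        obtain ⟨B0, hB0nn, hB0l, hB0r⟩ :=
          ENNReal.lt_iff_exists_real_btwn.mp (hC.trans_eq hceq)
        have hB0c : B0 < c := (ENNReal.ofReal_lt_ofReal_iff hc0).mp hB0r
        set B := max B0 (c/2) with hBdef
        have hBpos : 0 < B := lt_of_lt_of_le (by positivity) (le_max_right _ _)
        have hBc : B < c := max_lt hB0c (by linarith)
        have hσB : limsup F atTop < ENNReal.ofReal B :=
          hB0l.trans_le (ENNReal.ofReal_le_ofReal (le_max_left _ _))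
        have hevB : ∀ᶠ j : ℕ in atTop, hs j * l j < B := by
          filter_upwards [eventually_lt_of_limsup_lt hσB] with j hj
          simp only [hF] at hj
          exact (ENNReal.ofReal_lt_ofReal_iff hBpos).mp hj
        have hBp : (0:ℝ) < B^p := Real.rpow_pos_of_pos hBpos p
        have hcBp : B^p < c^p := Real.rpow_lt_rpow hBpos.le hBc hp
        set ε := c^p/B^p - 1 with hεdef
        have hε : 0 < ε := by
          have : 1 < c^p/B^p := (one_lt_div hBp).mpr hcBp
          rw [hεdef]; linarith
        have h1ε : (1+ε) * B^p + 0 = c^p := by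
          rw [hεdef]; field_simp; ring
        have hkc := CFET.keyC hp hmh hrv hinv1 htop hstop hanti hto hlpos hBpos hε hevB
        rw [← hG, h1ε] at hkc
        calc (limsup G (𝓝[>](0:ℝ)))^(1/p) ≤ (ENNReal.ofReal (c^p))^(1/p) :=
              ENNReal.rpow_le_rpow hkc h1p.le
        _ = ENNReal.ofReal ((c^p)^(1/p)) := ENNReal.ofReal_rpow_of_pos (by positivity)
        _ = ENNReal.ofReal c := by rw [CFET.real_rpow_pinv hp hc0.le]
        _ = C := hceq.symm
      have hlo : (liminf G (𝓝[>](0:ℝ)))^(1/p) ≤ liminf F atTop := by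
        apply le_of_forall_lt_imp_le_of_dense
        intro C hC
        rcases eq_or_ne C 0 with rfl | hC0
        · exact zero_le
        have hCtop : C ≠ ⊤ := ne_top_of_lt hC
        set c := C.toReal with hcdef
        have hc0 : 0 < c := ENNReal.toReal_pos hC0 hCtop
        have hceq : C = ENNReal.ofReal c := (ENNReal.ofReal_toReal hCtop).symm
        have hcp : (0:ℝ) < c^p := Real.rpow_pos_of_pos hc0 p
        have hν : ENNReal.ofReal (c^p) < liminf G (𝓝[>](0:ℝ)) := by
          have e1 : liminf G (𝓝[>](0:ℝ)) = ((liminf G (𝓝[>](0:ℝ)))^(1/p))^p :=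
            (CFET.rpow_invp hp _).symm
          rw [e1, ← ENNReal.ofReal_rpow_of_pos hc0]
          exact ENNReal.rpow_lt_rpow (lt_of_eq_of_lt hceq.symm hC) hp
        have hevA : ∀ᶠ x in 𝓝[>](0:ℝ),
            c^p * h x⁻¹ < (Nat.card {j : ℕ // x < l j} : ℝ) := by
          filter_upwards [eventually_lt_of_lt_liminf hν, self_mem_nhdsWithin,
            hhx.eventually_gt_atTop 0] with x h1 h2 h3
          simp only [hG] at h1
          have h4 : c^p < (Nat.card {j : ℕ // x < l j} : ℝ) / h x⁻¹ :=
            (ENNReal.ofReal_lt_ofReal_iff_of_nonneg hcp.le).mp h1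
          exact (lt_div_iff₀ h3).mp h4
        have hkb := CFET.keyB hp hsm hsrv hinv2 htop hanti hto hlpos hcp hevA
        rw [← hF, mul_one, CFET.real_rpow_pinv hp hc0.le] at hkb
        exact hceq.trans_le hkb
      have hlo2 : liminf F atTop ≤ (liminf G (𝓝[>](0:ℝ)))^(1/p) := by
        apply le_of_forall_gt_imp_ge_of_dense
        intro C hC
        rcases eq_or_ne C ⊤ with rfl | hCtop
        · exact le_top
        have hC0 : 0 < C := lt_of_le_of_lt zero_le hC
        set c := C.toReal with hcdef
        have hc0 : 0 < c := ENNReal.toReal_pos hC0.ne' hCtop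
        have hceq : C = ENNReal.ofReal c := (ENNReal.ofReal_toReal hCtop).symm
        have hcp : (0:ℝ) < c^p := Real.rpow_pos_of_pos hc0 p
        have hν : liminf G (𝓝[>](0:ℝ)) < ENNReal.ofReal (c^p) := by
          have e1 : liminf G (𝓝[>](0:ℝ)) = ((liminf G (𝓝[>](0:ℝ)))^(1/p))^p :=
            (CFET.rpow_invp hp _).symm
          rw [e1, ← ENNReal.ofReal_rpow_of_pos hc0]
          exact ENNReal.rpow_lt_rpow (hC.trans_eq hceq) hp
        by_contra hcon
        push_neg at hcon
        obtain ⟨B0, hB0nn, hB0l, hB0r⟩ := ENNReal.lt_iff_exists_real_btwn.mp hcon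
        have hB0pos : 0 < B0 := by
          rcases hB0nn.lt_or_eq with h' | h'
          · exact h'
          · exfalso
            rw [← h', ENNReal.ofReal_zero] at hB0l
            exact absurd hB0l (not_lt.mpr zero_le)
        have hcB0 : c < B0 :=
          (ENNReal.ofReal_lt_ofReal_iff hB0pos).mp (lt_of_eq_of_lt hceq.symm hB0l)
        have hevB : ∀ᶠ j : ℕ in atTop, B0 < hs j * l j := by
          filter_upwards [eventually_lt_of_lt_liminf hB0r] with j hj
          simp only [hF] at hj
          exact (ENNReal.ofReal_lt_ofReal_iff_of_nonneg hB0nn).mp hj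
        have hb : (0:ℝ) < B0^p := Real.rpow_pos_of_pos hB0pos p
        have hBp : c^p < B0^p := Real.rpow_lt_rpow hc0.le hcB0 hp
        set ε := B0^p/c^p - 1 with hεdef
        have hε : 0 < ε := by
          have : 1 < B0^p/c^p := (one_lt_div hcp).mpr hBp
          rw [hεdef]; linarith
        have h1ε : B0^p/(1+ε) = c^p := by
          rw [hεdef, show 1 + (B0^p/c^p - 1) = B0^p/c^p by ring,
            div_div_eq_mul_div, mul_comm, mul_div_assoc, div_self hb.ne', mul_one]
        have hkd := CFET.keyD hp hmh hrv hinv1 htop hanti hto hlpos hB0pos hε hevB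
        rw [← hG, h1ε] at hkd
        exact absurd hν (not_lt.mpr hkd)
      exact ⟨le_antisymm hup hup2, le_antisymm hlo2 hlo⟩
    · -- some eigenvalue is zero
      push_neg at hcase
      obtain ⟨J, hJle⟩ := hcase
      have hJ0 : l J = 0 := le_antisymm hJle (hl0 J)
      have hFt : Tendsto F atTop (𝓝 0) := by
        have hFz : F =ᶠ[atTop] fun _ => (0:ℝ≥0∞) := by
          filter_upwards [eventually_ge_atTop J] with j hj
          have hlj : l j = 0 := le_antisymm (hJ0 ▸ hanti hj) (hl0 j)
          simp [hF, hlj]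
        exact Tendsto.congr' hFz.symm tendsto_const_nhds
      have hGt : Tendsto G (𝓝[>](0:ℝ)) (𝓝 0) := by
        have hr : Tendsto (fun x : ℝ => (Nat.card {j : ℕ // x < l j} : ℝ)/h x⁻¹)
            (𝓝[>](0:ℝ)) (𝓝 0) := by
          apply squeeze_zero'
          · filter_upwards [self_mem_nhdsWithin] with x hx
            exact hGnn x hx
          · filter_upwards [self_mem_nhdsWithin, hhx.eventually_gt_atTop 0] with x hx hhx0
            have hcard : (Nat.card {j : ℕ // x < l j} : ℝ) ≤ (J:ℝ) := by
              exact_mod_cast CFET.N_le_of hanti (le_of_eq_of_le hJ0 (le_of_lt hx))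
            exact div_le_div_of_nonneg_right hcard hhx0.le
          · have h0 : Tendsto (fun x : ℝ => (J:ℝ) * (h x⁻¹)⁻¹) (𝓝[>](0:ℝ))
                (𝓝 ((J:ℝ) * 0)) := (hhx.inv_tendsto_atTop).const_mul _
            simp only [mul_zero] at h0
            exact h0.congr fun x => (div_eq_mul_inv _ _).symm
        have h1 := ENNReal.tendsto_ofReal hr
        rw [ENNReal.ofReal_zero] at h1
        rw [hG]
        exact h1
      refine ⟨?_, ?_⟩
      · rw [hFt.limsup_eq, hGt.limsup_eq, ENNReal.zero_rpow_of_pos h1p]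
      · rw [hFt.liminf_eq, hGt.liminf_eq, ENNReal.zero_rpow_of_pos h1p]
  refine ⟨key.1, key.2, ?_⟩
  intro c hc
  have hcp' : (0:ℝ) ≤ c^(1/p) := Real.rpow_nonneg hc _
  have hofr : (ENNReal.ofReal c)^(1/p) = ENNReal.ofReal (c^(1/p)) :=
    ENNReal.ofReal_rpow_of_nonneg hc h1p.le
  constructor
  · intro hcv
    have h1 : Tendsto G (𝓝[>](0:ℝ)) (𝓝 (ENNReal.ofReal c)) := by
      rw [hG]; exact ENNReal.tendsto_ofReal hcv
    have hσ : limsup F atTop = ENNReal.ofReal (c^(1/p)) := by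
      rw [key.1, h1.limsup_eq, hofr]
    have hσ' : liminf F atTop = ENNReal.ofReal (c^(1/p)) := by
      rw [key.2, h1.liminf_eq, hofr]
    have h2 : Tendsto F atTop (𝓝 (ENNReal.ofReal (c^(1/p)))) :=
      tendsto_of_liminf_eq_limsup hσ' hσ
    have h3 : Tendsto (fun j => (F j).toReal) atTop
        (𝓝 ((ENNReal.ofReal (c^(1/p))).toReal)) :=
      (ENNReal.tendsto_toReal ENNReal.ofReal_ne_top).comp h2
    rw [ENNReal.toReal_ofReal hcp'] at h3
    have h4 : (fun j : ℕ => (F j).toReal) = fun j : ℕ => hs j * l j := by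
      funext j
      simp only [hF]
      exact ENNReal.toReal_ofReal (hFnn j)
    rwa [h4] at h3
  · intro hcv
    have h1 : Tendsto F atTop (𝓝 (ENNReal.ofReal (c^(1/p)))) := by
      rw [hF]; exact ENNReal.tendsto_ofReal hcv
    have hν : limsup G (𝓝[>](0:ℝ)) = ENNReal.ofReal c := by
      have e1 : (limsup G (𝓝[>](0:ℝ)))^(1/p) = (ENNReal.ofReal c)^(1/p) := by
        rw [← key.1, h1.limsup_eq, hofr]
      have e2 := congrArg (fun x : ℝ≥0∞ => x^p) e1
      rwa [CFET.rpow_invp hp, CFET.rpow_invp hp] at e2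
    have hν' : liminf G (𝓝[>](0:ℝ)) = ENNReal.ofReal c := by
      have e1 : (liminf G (𝓝[>](0:ℝ)))^(1/p) = (ENNReal.ofReal c)^(1/p) := by
        rw [← key.2, h1.liminf_eq, hofr]
      have e2 := congrArg (fun x : ℝ≥0∞ => x^p) e1
      rwa [CFET.rpow_invp hp, CFET.rpow_invp hp] at e2
    have h2 : Tendsto G (𝓝[>](0:ℝ)) (𝓝 (ENNReal.ofReal c)) :=
      tendsto_of_liminf_eq_limsup hν' hν
    have h3 : Tendsto (fun x => (G x).toReal) (𝓝[>](0:ℝ))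
        (𝓝 ((ENNReal.ofReal c).toReal)) :=
      (ENNReal.tendsto_toReal ENNReal.ofReal_ne_top).comp h2
    rw [ENNReal.toReal_ofReal hc] at h3
    apply h3.congr'
    filter_upwards [self_mem_nhdsWithin] with x hx
    simp only [hG]
    exact ENNReal.toReal_ofReal (hGnn x hx)
end

section
/- Let N : (0,∞) → [0,∞) be a non-increasing counting function of a nonnegative non-increasing null sequence (λ_j), and suppose N(λ) ∼ c·λ^{-p}·|log λ|^q as λ → 0+, with c > 0, p > 0, q ∈ ℝ. Then λ_j ∼ (c·p^{-q})^{1/p} · j^{-1/p} (log j)^{q/p} as j → ∞. -/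
open Filter Topology

/-- Inversion: `N(x) ≤ j ↔ l j ≤ x` for an antitone nonnegative null sequence. -/
lemma count_le_iff_aux (l : ℕ → ℝ) (hanti : Antitone l)
    (hto : Tendsto l atTop (𝓝 0)) {x : ℝ} (hx : 0 < x) (j : ℕ) :
    Nat.card {i : ℕ // x < l i} ≤ j ↔ l j ≤ x := by
  have hcard : Nat.card {i : ℕ // x < l i} = Set.ncard {i : ℕ | x < l i} :=
    Nat.card_coe_set_eq _
  obtain ⟨m, hm⟩ := eventually_atTop.1 (hto.eventually (gt_mem_nhds hx))
  have hfin : {i : ℕ | x < l i}.Finite := by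
    apply (Finset.range m).finite_toSet.subset
    intro i hi
    simp only [Finset.coe_range, Set.mem_Iio]
    by_contra h
    exact absurd (hm i (le_of_not_gt h)) (not_lt.2 (le_of_lt hi))
  constructor
  · intro h
    by_contra hxl
    push_neg at hxl
    have hsub : ((Finset.Iic j : Finset ℕ) : Set ℕ) ⊆ {i : ℕ | x < l i} := by
      intro i hi
      simp only [Finset.coe_Iic, Set.mem_Iic] at hi
      exact Set.mem_setOf.2 (lt_of_lt_of_le hxl (hanti hi))
    have := Set.ncard_le_ncard hsub hfin
    rw [Set.ncard_coe_finset, Nat.card_Iic] at this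
    omega
  · intro h
    have hsub : {i : ℕ | x < l i} ⊆ ((Finset.range j : Finset ℕ) : Set ℕ) := by
      intro i hi
      simp only [Finset.coe_range, Set.mem_Iio]
      by_contra hij
      exact absurd (le_trans (hanti (le_of_not_gt hij)) h) (not_le.2 hi)
    have := Set.ncard_le_ncard hsub (Finset.range j).finite_toSet
    rw [Set.ncard_coe_finset, Finset.card_range] at this
    omega

open Real

/-- Key limit: `N(t·g j)/j → t^{-p}` where `g j = C j^{-1/p} (log j)^{q/p}`. -/
lemma key_limit_aux (p q c : ℝ) (hc : 0 < c) (hp : 0 < p)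
    (N : ℝ → ℝ)
    (hN : Tendsto (fun x : ℝ => N x / (c * x ^ (-p) * |Real.log x| ^ q))
        (𝓝[>] (0:ℝ)) (𝓝 1)) (t : ℝ) (ht : 0 < t) :
    Tendsto (fun j : ℕ =>
        N (t * ((c * p ^ (-q)) ^ p⁻¹ * (j : ℝ) ^ (-p⁻¹) * Real.log j ^ (q / p))) / j)
      atTop (𝓝 (t ^ (-p))) := by
  set C : ℝ := (c * p ^ (-q)) ^ p⁻¹ with hCdef
  have hpq : (0:ℝ) < c * p ^ (-q) := mul_pos hc (rpow_pos_of_pos hp _)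
  have hC0 : 0 < C := rpow_pos_of_pos hpq _
  set g : ℕ → ℝ := fun j => C * (j : ℝ) ^ (-p⁻¹) * Real.log j ^ (q / p) with hgdef
  have hcast : Tendsto (fun j : ℕ => (j : ℝ)) atTop atTop := tendsto_natCast_atTop_atTop
  have hjlarge : ∀ᶠ j : ℕ in atTop, (1:ℝ) < (j:ℝ) := hcast.eventually_gt_atTop 1
  have hlogpos : ∀ᶠ j : ℕ in atTop, 0 < Real.log j := by
    filter_upwards [hjlarge] with j hj using Real.log_pos hj
  have hgpos : ∀ᶠ j : ℕ in atTop, 0 < g j := by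
    filter_upwards [hjlarge, hlogpos] with j hj hlj
    exact mul_pos (mul_pos hC0 (rpow_pos_of_pos (by linarith) _)) (rpow_pos_of_pos hlj _)
  -- g → 0
  have hg0 : Tendsto g atTop (𝓝 0) := by
    have h1 : Tendsto (fun x : ℝ => Real.log x ^ (q/p) / x ^ p⁻¹) atTop (𝓝 0) :=
      (isLittleO_log_rpow_rpow_atTop (q/p) (inv_pos.2 hp)).tendsto_div_nhds_zero
    have h2 : Tendsto (fun j : ℕ => C * (Real.log j ^ (q/p) / (j:ℝ) ^ p⁻¹)) atTop (𝓝 (C * 0)) :=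
      (h1.comp hcast).const_mul C
    rw [mul_zero] at h2
    apply h2.congr'
    filter_upwards [hjlarge] with j hj
    have hj0 : (0:ℝ) ≤ (j:ℝ) := by linarith
    show C * (Real.log j ^ (q/p) / (j:ℝ) ^ p⁻¹) = C * (j:ℝ) ^ (-p⁻¹) * Real.log j ^ (q/p)
    rw [Real.rpow_neg hj0, div_eq_mul_inv]
    ring
  have htg0 : Tendsto (fun j : ℕ => t * g j) atTop (𝓝[>] 0) := by
    apply tendsto_nhdsWithin_of_tendsto_nhds_of_eventually_within
    · simpa using hg0.const_mul t
    · filter_upwards [hgpos] with j hj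
      exact Set.mem_Ioi.2 (mul_pos ht hj)
  have hA : Tendsto (fun j : ℕ =>
      N (t * g j) / (c * (t * g j) ^ (-p) * |Real.log (t * g j)| ^ q)) atTop (𝓝 1) :=
    hN.comp htg0
  have hlogj : Tendsto (fun j : ℕ => Real.log j) atTop atTop :=
    Real.tendsto_log_atTop.comp hcast
  -- log(t g j) expansion and ratio limit
  have hlogdiv : Tendsto (fun j : ℕ => Real.log (t * g j) / Real.log j) atTop (𝓝 (-p⁻¹)) := by
    have e1 : Tendsto (fun j : ℕ => (Real.log t + Real.log C) / Real.log j) atTop (𝓝 0) :=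
      tendsto_const_nhds.div_atTop hlogj
    have e2 : Tendsto (fun j : ℕ => Real.log (Real.log j) / Real.log j) atTop (𝓝 0) :=
      (Real.isLittleO_log_id_atTop.tendsto_div_nhds_zero).comp hlogj
    have e3 : Tendsto (fun j : ℕ =>
        (Real.log t + Real.log C) / Real.log j + (-p⁻¹)
          + (q/p) * (Real.log (Real.log j) / Real.log j)) atTop
        (𝓝 (0 + (-p⁻¹) + (q/p) * 0)) := (e1.add tendsto_const_nhds).add (e2.const_mul _)
    rw [zero_add, mul_zero, add_zero] at e3
    apply e3.congr'
    filter_upwards [hjlarge, hlogpos] with j hj hlj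
    have hj0 : (0:ℝ) < (j:ℝ) := by linarith
    have hL : Real.log j ≠ 0 := ne_of_gt hlj
    have hexp : Real.log (t * g j) =
        (Real.log t + Real.log C) + (-p⁻¹) * Real.log j
          + (q/p) * Real.log (Real.log j) := by
      rw [hgdef]
      rw [Real.log_mul (ne_of_gt ht) (ne_of_gt (by positivity :
            (0:ℝ) < C * (j:ℝ) ^ (-p⁻¹) * Real.log j ^ (q/p))),
          Real.log_mul (ne_of_gt (by positivity : (0:ℝ) < C * (j:ℝ) ^ (-p⁻¹)))
            (ne_of_gt (rpow_pos_of_pos hlj _)),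
          Real.log_mul (ne_of_gt hC0) (ne_of_gt (rpow_pos_of_pos hj0 _)),
          Real.log_rpow hj0, Real.log_rpow hlj]
      ring
    rw [hexp]
    field_simp
  have hlogneg : ∀ᶠ j : ℕ in atTop, Real.log (t * g j) < 0 := by
    have : ∀ᶠ j : ℕ in atTop, Real.log (t * g j) / Real.log j < 0 :=
      hlogdiv.eventually (eventually_lt_nhds (by simp [hp, inv_pos] : -p⁻¹ < (0:ℝ)))
    filter_upwards [this, hlogpos] with j h1 h2
    rcases div_neg_iff.1 h1 with ⟨_, h⟩ | ⟨h, _⟩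
    · linarith
    · exact h
  have hr : Tendsto (fun j : ℕ => |Real.log (t * g j)| / Real.log j) atTop (𝓝 p⁻¹) := by
    have := hlogdiv.neg
    rw [neg_neg] at this
    apply this.congr'
    filter_upwards [hlogneg] with j hj
    rw [abs_of_neg hj, neg_div]
  have hrq : Tendsto (fun j : ℕ => (|Real.log (t * g j)| / Real.log j) ^ q) atTop
      (𝓝 (p⁻¹ ^ q)) :=
    ((Real.continuousAt_rpow_const p⁻¹ q (Or.inl (inv_pos.2 hp).ne')).tendsto).comp hr
  -- B limit
  have hB : Tendsto (fun j : ℕ =>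
      c * (t * g j) ^ (-p) * |Real.log (t * g j)| ^ q / j) atTop (𝓝 (t ^ (-p))) := by
    have hlim : Tendsto (fun j : ℕ =>
        (c * t ^ (-p) * C ^ (-p)) * ((|Real.log (t * g j)| / Real.log j) ^ q)) atTop
        (𝓝 ((c * t ^ (-p) * C ^ (-p)) * p⁻¹ ^ q)) := hrq.const_mul _
    have hval : (c * t ^ (-p) * C ^ (-p)) * p⁻¹ ^ q = t ^ (-p) := by
      have h1 : C ^ (-p) = (c * p ^ (-q))⁻¹ := by
        rw [hCdef, ← Real.rpow_mul hpq.le]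
        have : p⁻¹ * -p = -1 := by field_simp
        rw [this, Real.rpow_neg_one]
      rw [h1, Real.rpow_neg hp.le q, Real.inv_rpow hp.le q]
      have hpq' : (0:ℝ) < p ^ q := rpow_pos_of_pos hp q
      field_simp
    rw [hval] at hlim
    apply hlim.congr'
    filter_upwards [hjlarge, hlogpos, hgpos, hlogneg] with j hj hlj hgj hln
    have hj0 : (0:ℝ) < (j:ℝ) := by linarith
    have habs : 0 < |Real.log (t * g j)| := abs_pos.2 (ne_of_lt hln)
    -- (t*g j)^(-p) = t^(-p) * C^(-p) * j * (log j)^(-q)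
    have hsplit : (t * g j) ^ (-p) =
        t ^ (-p) * C ^ (-p) * (j:ℝ) * Real.log j ^ (-q) := by
      rw [hgdef]
      rw [Real.mul_rpow ht.le (by positivity), Real.mul_rpow (by positivity) (by positivity),
          Real.mul_rpow hC0.le (by positivity),
          ← Real.rpow_mul hj0.le, ← Real.rpow_mul hlj.le]
      have : -p⁻¹ * -p = 1 := by field_simp
      rw [this, Real.rpow_one]
      have : q / p * -p = -q := by field_simp
      rw [this]
      ring
    have habsq : |Real.log (t * g j)| ^ q =
        (|Real.log (t * g j)| / Real.log j) ^ q * Real.log j ^ q := by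
      rw [Real.div_rpow (abs_nonneg _) hlj.le]
      field_simp [ne_of_gt (rpow_pos_of_pos hlj q)]
    have hlq : Real.log j ^ (-q) * Real.log j ^ q = 1 := by
      rw [← Real.rpow_add hlj]; simp
    rw [hsplit, habsq]
    have expand : c * (t ^ (-p) * C ^ (-p) * (j:ℝ) * Real.log j ^ (-q)) *
        ((|Real.log (t * g j)| / Real.log j) ^ q * Real.log j ^ q) =
        (c * t ^ (-p) * C ^ (-p) * (|Real.log (t * g j)| / Real.log j) ^ q * (j:ℝ)) *
          (Real.log j ^ (-q) * Real.log j ^ q) := by ring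
    rw [expand, hlq, mul_one, mul_div_assoc, div_self (ne_of_gt hj0), mul_one]
  -- combine
  have hD : ∀ᶠ j : ℕ in atTop,
      c * (t * g j) ^ (-p) * |Real.log (t * g j)| ^ q ≠ 0 := by
    filter_upwards [hgpos, hlogneg] with j hgj hln
    have : 0 < c * (t * g j) ^ (-p) * |Real.log (t * g j)| ^ q :=
      mul_pos (mul_pos hc (rpow_pos_of_pos (mul_pos ht hgj) _))
        (rpow_pos_of_pos (abs_pos.2 (ne_of_lt hln)) _)
    exact ne_of_gt this
  have := hA.mul hB
  rw [one_mul] at this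
  apply this.congr'
  filter_upwards [hD] with j hDj
  show N (t * g j) / (c * (t * g j) ^ (-p) * |Real.log (t * g j)| ^ q) *
      (c * (t * g j) ^ (-p) * |Real.log (t * g j)| ^ q / j) = N (t * g j) / j
  rw [div_mul_div_comm, mul_comm (N (t * g j)), mul_div_mul_left _ _ hDj]


/-- If the counting function `N(λ) = #{j : λ_j > λ}` of a non-increasing nonnegative null
sequence `(λ_j)` satisfies `N(λ) ∼ c λ^{-p} |log λ|^q` as `λ → 0+` (`c > 0`, `p > 0`),
then `λ_j ∼ (c p^{-q})^{1/p} j^{-1/p} (log j)^{q/p}` as `j → ∞`. -/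
theorem eigenvalue_asymptotics_of_counting (p q c : ℝ) (hc : 0 < c) (hp : 0 < p)
    (l : ℕ → ℝ) (hl0 : ∀ j, 0 ≤ l j) (hanti : Antitone l)
    (hto : Tendsto l atTop (𝓝 0))
    (hN : Tendsto
        (fun x : ℝ => (Nat.card {j : ℕ // x < l j} : ℝ) / (c * x ^ (-p) * |Real.log x| ^ q))
        (𝓝[>] (0:ℝ)) (𝓝 1)) :
    Tendsto
      (fun j : ℕ => l j /
        ((c * p ^ (-q)) ^ p⁻¹ * (j : ℝ) ^ (-p⁻¹) * (Real.log j) ^ (q / p)))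
      atTop (𝓝 1) := by
  have hpq : (0:ℝ) < c * p ^ (-q) := mul_pos hc (Real.rpow_pos_of_pos hp _)
  have hC0 : (0:ℝ) < (c * p ^ (-q)) ^ p⁻¹ := Real.rpow_pos_of_pos hpq _
  set g : ℕ → ℝ := fun j => (c * p ^ (-q)) ^ p⁻¹ * (j : ℝ) ^ (-p⁻¹) * Real.log j ^ (q / p)
    with hgdef
  have key : ∀ t : ℝ, 0 < t → Tendsto
      (fun j : ℕ => (Nat.card {i : ℕ // t * g j < l i} : ℝ) / j) atTop (𝓝 (t ^ (-p))) :=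
    fun t ht => key_limit_aux p q c hc hp
      (fun x => (Nat.card {i : ℕ // x < l i} : ℝ)) hN t ht
  have hjlarge : ∀ᶠ j : ℕ in atTop, (1:ℝ) < (j:ℝ) :=
    tendsto_natCast_atTop_atTop.eventually_gt_atTop 1
  have hgpos : ∀ᶠ j : ℕ in atTop, 0 < g j := by
    filter_upwards [hjlarge] with j hj
    have hlj : 0 < Real.log j := Real.log_pos hj
    exact mul_pos (mul_pos hC0 (Real.rpow_pos_of_pos (by linarith) _))
      (Real.rpow_pos_of_pos hlj _)
  rw [Metric.tendsto_atTop]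
  intro ε hε
  set δ : ℝ := min (ε/2) (1/2) with hδdef
  have hδ0 : 0 < δ := lt_min (by linarith) (by norm_num)
  have hδε : δ < ε := lt_of_le_of_lt (min_le_left _ _) (by linarith)
  have hδ1 : δ < 1 := lt_of_le_of_lt (min_le_right _ _) (by norm_num)
  have hlt1 : (1 + δ) ^ (-p) < 1 :=
    Real.rpow_lt_one_of_one_lt_of_neg (by linarith) (neg_lt_zero.2 hp)
  have hgt1 : 1 < (1 - δ) ^ (-p) := by
    rw [Real.one_lt_rpow_iff_of_pos (by linarith)]
    exact Or.inr ⟨by linarith, neg_lt_zero.2 hp⟩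
  have h1 : ∀ᶠ j : ℕ in atTop,
      (Nat.card {i : ℕ // (1 + δ) * g j < l i} : ℝ) / j < 1 :=
    (key (1 + δ) (by linarith)).eventually (eventually_lt_nhds hlt1)
  have h2 : ∀ᶠ j : ℕ in atTop,
      1 < (Nat.card {i : ℕ // (1 - δ) * g j < l i} : ℝ) / j :=
    (key (1 - δ) (by linarith)).eventually (eventually_gt_nhds hgt1)
  have hev : ∀ᶠ j : ℕ in atTop, dist (l j / g j) 1 < ε := by
    filter_upwards [h1, h2, hgpos, hjlarge] with j h1j h2j hgj hj
    have hj0 : (0:ℝ) < (j:ℝ) := by linarith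
    -- upper bound
    have hub : l j ≤ (1 + δ) * g j := by
      have hcardlt : (Nat.card {i : ℕ // (1 + δ) * g j < l i} : ℝ) < j :=
        (div_lt_one hj0).1 h1j
      have hcardle : Nat.card {i : ℕ // (1 + δ) * g j < l i} ≤ j := by
        exact_mod_cast le_of_lt hcardlt
      exact (count_le_iff_aux l hanti hto (mul_pos (by linarith) hgj) j).1 hcardle
    -- lower bound
    have hlb : (1 - δ) * g j < l j := by
      by_contra hcon
      push_neg at hcon
      have hcardle : Nat.card {i : ℕ // (1 - δ) * g j < l i} ≤ j :=
        (count_le_iff_aux l hanti hto (mul_pos (by linarith) hgj) j).2 hcon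
      have : (Nat.card {i : ℕ // (1 - δ) * g j < l i} : ℝ) ≤ j := by exact_mod_cast hcardle
      have := (one_lt_div hj0).1 h2j
      linarith
    have hfle : l j / g j ≤ 1 + δ := (div_le_iff₀ hgj).2 (by linarith)
    have hflt : 1 - δ < l j / g j := (lt_div_iff₀ hgj).2 (by linarith)
    rw [Real.dist_eq, abs_lt]
    constructor <;> linarith
  exact eventually_atTop.1 hev
end
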